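/- Let ρ and σ be two well agreeing near weights on R. For each a ∈ Γ⁺ choose φ_a ∈ R \ {0} with (ρ(φ_a), σ(φ_a)) = a, and let R' := F[{φ_a : a ∈ Γ⁺}] be the F-subalgebra of R generated by these elements. Then H(R') = H(R). -/

import Mathlib

structure NearWeight (F R : Type*) [Field F] [CommRing R] [Algebra F R] where
  w : R → WithBot ℕ
  N0 : ∀ f : R, w f = ⊥ ↔ f = 0
  N1 : ∀ (c : F) (f : R), c ≠ 0 → w (c • f) = w f
  N2 : ∀ f g : R, w (f + g) ≤ max (w f) (w g)
  N3 : ∀ f g h : R, w f < w g → w (f * h) ≤ w (g * h)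
  N3' : ∀ f g h : R, w f < w g → w 1 < w h → w (f * h) < w (g * h)
  N4 : ∀ f g : R, w 1 < w f → w 1 < w g → w f = w g →
      ∃ c : F, c ≠ 0 ∧ w (f - c • g) < w f
  N5 : ∀ f g : R, w (f * g) ≤ w f + w g
  N5' : ∀ f g : R, w 1 < w f → w 1 < w g → w (f * g) = w f + w g
  norm0 : ∀ f : R, f ≠ 0 → w f ≤ w 1 → w f = 0
  normgcd : ∀ d : ℕ, (∀ f : R, w 1 < w f → ∃ k : ℕ, w f = ((d * k : ℕ) : WithBot ℕ)) → d = 1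

namespace NearWeight

variable {F R : Type*} [Field F] [CommRing R] [Algebra F R]

def U (ρ : NearWeight F R) : Set R := {r | ρ.w r ≤ ρ.w 1}

def M (ρ : NearWeight F R) : Set R := {r | ρ.w 1 < ρ.w r}

def nval (ρ : NearWeight F R) (f : R) : ℕ := WithBot.unbotD 0 (ρ.w f)

def Hset (ρ σ : NearWeight F R) (S : Set R) : Set (ℕ × ℕ) :=
  {p | ∃ f ∈ S, f ≠ 0 ∧ (ρ.nval f, σ.nval f) = p}

def WellAgreeing (ρ σ : NearWeight F R) : Prop :=
  (Hset ρ σ Set.univ)ᶜ.Finite ∧ ρ.U ∩ σ.U = Set.range (algebraMap F R)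

noncomputable def xH (ρ σ : NearWeight F R) (n : ℕ) : ℕ :=
  sInf {m | (m, n) ∈ Hset ρ σ Set.univ}

noncomputable def yH (ρ σ : NearWeight F R) (n : ℕ) : ℕ :=
  sInf {m | (n, m) ∈ Hset ρ σ Set.univ}

def lub (a b : ℕ × ℕ) : ℕ × ℕ := (max a.1 b.1, max a.2 b.2)

noncomputable def Gamma (ρ σ : NearWeight F R) : Set (ℕ × ℕ) :=
  {p | ∃ m : ℕ, p = (m, yH ρ σ m)} ∪ {p | ∃ n : ℕ, p = (xH ρ σ n, n)}

def Hbarx (ρ σ : NearWeight F R) : Set ℕ := {m | (m, 0) ∈ Hset ρ σ Set.univ}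

def Hbary (ρ σ : NearWeight F R) : Set ℕ := {n | (0, n) ∈ Hset ρ σ Set.univ}

noncomputable def GammaTilde (ρ σ : NearWeight F R) : Set (ℕ × ℕ) :=
  {p | ∃ m : ℕ, m ∉ Hbarx ρ σ ∧ p = (m, yH ρ σ m)}

def Delta (p : ℕ × ℕ) : Set (ℕ × ℕ) :=
  {q | (q.1 = p.1 ∧ q.2 < p.2) ∨ (q.2 = p.2 ∧ q.1 < p.1)}

noncomputable def tw (ρ : NearWeight F R) (f : R) : ℤ :=
  sInf {z : ℤ | ∃ g ∈ ρ.M, z = (ρ.nval (f * g) : ℤ) - (ρ.nval g : ℤ)}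

end NearWeight

/-!
`H(S)` is closed under the componentwise maximum `lub` as soon as `S` is closed under addition:
when both coordinates of `a` and `b` differ, the sum of their witnesses realizes `lub a b`.
Every `(p, q) ∈ H` is `lub (p, y_H p) (x_H q, q)`, so it suffices to realize these two points in
`R'`. On the axes, products of the generators `φ (m, 0)` do it: a nonzero element of
`U_ρ ∩ U_σ = F` is a scalar, so on elements of σ-value `0` the ρ-value is additive. Off the
axes, `(m, y_H m)` lies in `Γ̃` by definition, and `(x_H n, n)` does too because axiom N4 forces
`y_H (x_H n) = n`.
-/

namespace NearWeight

variable {F R : Type*} [Field F] [CommRing R] [Algebra F R]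

section Valuation

variable (ρ : NearWeight F R) {f g : R}

lemma w_one [Nontrivial R] : ρ.w 1 = 0 :=
  ρ.norm0 1 one_ne_zero le_rfl

lemma w_eq_nval (hf : f ≠ 0) : ρ.w f = ρ.nval f := by
  obtain ⟨k, hk⟩ := WithBot.ne_bot_iff_exists.mp fun h => hf ((ρ.N0 f).mp h)
  rw [nval, ← hk]
  rfl

lemma nval_of_w_eq {k : ℕ} (h : ρ.w f = k) : ρ.nval f = k := by
  simp [nval, h]

lemma ne_zero_of_w_eq {k : ℕ} (h : ρ.w f = k) : f ≠ 0 := by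
  rintro rfl
  rw [(ρ.N0 0).mpr rfl] at h
  exact WithBot.bot_ne_coe h

lemma nval_smul {c : F} (hc : c ≠ 0) (f : R) : ρ.nval (c • f) = ρ.nval f := by
  simp only [nval, ρ.N1 c f hc]

lemma nval_eq_zero_of_mem_U (hf : f ≠ 0) (hU : f ∈ ρ.U) : ρ.nval f = 0 :=
  ρ.nval_of_w_eq (ρ.norm0 f hf hU)

lemma mem_U_of_nval_eq_zero [Nontrivial R] (hf : f ≠ 0) (h : ρ.nval f = 0) : f ∈ ρ.U := by
  show ρ.w f ≤ ρ.w 1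
  rw [ρ.w_eq_nval hf, h, ρ.w_one]
  rfl

lemma w_add_of_lt (h : ρ.w f < ρ.w g) : ρ.w (f + g) = ρ.w g := by
  refine le_antisymm ((ρ.N2 f g).trans (max_le h.le le_rfl)) ?_
  have hg := ρ.N2 (f + g) (-f)
  rw [add_neg_cancel_comm, ← neg_one_smul F f, ρ.N1 _ _ (neg_ne_zero.mpr one_ne_zero)] at hg
  exact (le_max_iff.mp hg).resolve_right (not_le.mpr h)

lemma w_sub_of_lt (h : ρ.w g < ρ.w f) : ρ.w (f - g) = ρ.w f := by
  rw [sub_eq_neg_add, ρ.w_add_of_lt]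
  rwa [← neg_one_smul F g, ρ.N1 _ _ (neg_ne_zero.mpr one_ne_zero)]

lemma nval_add_of_lt (hf : f ≠ 0) (hg : g ≠ 0) (h : ρ.nval f < ρ.nval g) :
    f + g ≠ 0 ∧ ρ.nval (f + g) = ρ.nval g := by
  have hadd := ρ.w_add_of_lt (f := f) (g := g) (by
    rw [ρ.w_eq_nval hf, ρ.w_eq_nval hg]
    exact_mod_cast h)
  rw [ρ.w_eq_nval hg] at hadd
  exact ⟨ρ.ne_zero_of_w_eq hadd, ρ.nval_of_w_eq hadd⟩

lemma nval_add_of_ne (hf : f ≠ 0) (hg : g ≠ 0) (h : ρ.nval f ≠ ρ.nval g) :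
    f + g ≠ 0 ∧ ρ.nval (f + g) = max (ρ.nval f) (ρ.nval g) := by
  rcases h.lt_or_gt with h | h
  · rw [max_eq_right h.le]
    exact ρ.nval_add_of_lt hf hg h
  · rw [max_eq_left h.le, add_comm]
    exact ρ.nval_add_of_lt hg hf h

end Valuation

section Hset

variable {ρ σ : NearWeight F R} {S : Set R} {p : ℕ × ℕ}

lemma Hset_mono {T : Set R} (h : S ⊆ T) : Hset ρ σ S ⊆ Hset ρ σ T :=
  fun _ ⟨f, hfS, hf0, hfp⟩ => ⟨f, h hfS, hf0, hfp⟩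

lemma nontrivial_of_mem_Hset (hp : p ∈ Hset ρ σ S) : Nontrivial R :=
  let ⟨f, _, hf0, _⟩ := hp
  ⟨⟨f, 0, hf0⟩⟩

lemma mem_Hset_swap : p ∈ Hset σ ρ S ↔ p.swap ∈ Hset ρ σ S := by
  constructor
  · rintro ⟨f, hfS, hf0, rfl⟩
    exact ⟨f, hfS, hf0, rfl⟩
  · rintro ⟨f, hfS, hf0, hfp⟩
    exact ⟨f, hfS, hf0, by rw [← Prod.swap_swap p, ← hfp]; rfl⟩

lemma Hbary_eq_Hbarx_swap : Hbary ρ σ = Hbarx σ ρ :=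
  Set.ext fun n => (mem_Hset_swap (p := (n, 0))).symm

lemma zero_mem_Hset [Nontrivial R] (hS : 1 ∈ S) : (0, 0) ∈ Hset ρ σ S :=
  ⟨1, hS, one_ne_zero, by rw [ρ.nval_of_w_eq ρ.w_one, σ.nval_of_w_eq σ.w_one]; rfl⟩

lemma lub_mem_Hset (S : AddSubmonoid R) {a b : ℕ × ℕ} (ha : a ∈ Hset ρ σ S)
    (hb : b ∈ Hset ρ σ S) : lub a b ∈ Hset ρ σ S := by
  obtain ⟨f, hfS, hf0, rfl⟩ := ha
  obtain ⟨g, hgS, hg0, rfl⟩ := hb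
  by_cases hρ : ρ.nval f = ρ.nval g
  · rcases le_total (σ.nval f) (σ.nval g) with hσ | hσ
    · exact ⟨g, hgS, hg0, by rw [lub, hρ, max_self, max_eq_right hσ]⟩
    · exact ⟨f, hfS, hf0, by rw [lub, ← hρ, max_self, max_eq_left hσ]⟩
  by_cases hσ : σ.nval f = σ.nval g
  · rcases le_total (ρ.nval f) (ρ.nval g) with hρ' | hρ'
    · exact ⟨g, hgS, hg0, by rw [lub, hσ, max_self, max_eq_right hρ']⟩
    · exact ⟨f, hfS, hf0, by rw [lub, ← hσ, max_self, max_eq_left hρ']⟩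
  obtain ⟨hfg, hρfg⟩ := ρ.nval_add_of_ne hf0 hg0 hρ
  exact ⟨f + g, S.add_mem hfS hgS, hfg, by rw [lub, hρfg, (σ.nval_add_of_ne hf0 hg0 hσ).2]⟩

lemma xH_le {m n : ℕ} (h : (m, n) ∈ Hset ρ σ Set.univ) : xH ρ σ n ≤ m :=
  Nat.sInf_le h

lemma yH_le {m n : ℕ} (h : (m, n) ∈ Hset ρ σ Set.univ) : yH ρ σ m ≤ n :=
  Nat.sInf_le h

lemma mk_xH_mem_Hset_univ {m n : ℕ} (h : (m, n) ∈ Hset ρ σ Set.univ) :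
    (xH ρ σ n, n) ∈ Hset ρ σ Set.univ :=
  Nat.sInf_mem (s := {k | (k, n) ∈ Hset ρ σ Set.univ}) ⟨m, h⟩

lemma mk_yH_mem_Hset_univ {m n : ℕ} (h : (m, n) ∈ Hset ρ σ Set.univ) :
    (m, yH ρ σ m) ∈ Hset ρ σ Set.univ :=
  Nat.sInf_mem (s := {k | (m, k) ∈ Hset ρ σ Set.univ}) ⟨n, h⟩

lemma lub_mk_yH_mk_xH (hp : p ∈ Hset ρ σ Set.univ) :
    lub (p.1, yH ρ σ p.1) (xH ρ σ p.2, p.2) = p :=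
  Prod.ext (max_eq_left (xH_le hp)) (max_eq_right (yH_le hp))

end Hset

section Product

variable (ρ σ : NearWeight F R) {f g : R}

lemma exists_algebraMap_eq_of_mem_U_inter (hU : ρ.U ∩ σ.U = Set.range (algebraMap F R))
    (hf : f ≠ 0) (hρ : f ∈ ρ.U) (hσ : f ∈ σ.U) : ∃ c : F, c ≠ 0 ∧ algebraMap F R c = f := by
  obtain ⟨c, rfl⟩ : f ∈ Set.range (algebraMap F R) := hU ▸ ⟨hρ, hσ⟩
  exact ⟨c, fun hc => hf (by rw [hc, map_zero]), rfl⟩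

lemma nval_mul_of_mem_U_inter (hU : ρ.U ∩ σ.U = Set.range (algebraMap F R))
    (hf : f ≠ 0) (hg : g ≠ 0) (hρ : f ∈ ρ.U) (hσ : f ∈ σ.U) :
    f * g ≠ 0 ∧ ρ.nval (f * g) = ρ.nval f + ρ.nval g ∧ σ.nval (f * g) = σ.nval g := by
  rw [ρ.nval_eq_zero_of_mem_U hf hρ, zero_add]
  obtain ⟨c, hc, rfl⟩ := exists_algebraMap_eq_of_mem_U_inter ρ σ hU hf hρ hσ
  rw [← Algebra.smul_def]
  exact ⟨smul_ne_zero hc hg, ρ.nval_smul hc g, σ.nval_smul hc g⟩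

lemma nval_mul_of_nval_eq_zero [Nontrivial R] (hU : ρ.U ∩ σ.U = Set.range (algebraMap F R))
    (hf : f ≠ 0) (hg : g ≠ 0) (hfσ : σ.nval f = 0) (hgσ : σ.nval g = 0) :
    f * g ≠ 0 ∧ ρ.nval (f * g) = ρ.nval f + ρ.nval g ∧ σ.nval (f * g) = 0 := by
  have hfU := σ.mem_U_of_nval_eq_zero hf hfσ
  have hgU := σ.mem_U_of_nval_eq_zero hg hgσ
  by_cases hfρ : f ∈ ρ.U
  · rw [← hgσ]
    exact nval_mul_of_mem_U_inter ρ σ hU hf hg hfρ hfU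
  by_cases hgρ : g ∈ ρ.U
  · rw [← hfσ, mul_comm, add_comm]
    exact nval_mul_of_mem_U_inter ρ σ hU hg hf hgρ hgU
  have hw : ρ.w (f * g) = ((ρ.nval f + ρ.nval g : ℕ) : WithBot ℕ) := by
    rw [ρ.N5' f g (not_le.mp hfρ) (not_le.mp hgρ), ρ.w_eq_nval hf, ρ.w_eq_nval hg, Nat.cast_add]
  have hfg := ρ.ne_zero_of_w_eq hw
  refine ⟨hfg, ρ.nval_of_w_eq hw, σ.nval_eq_zero_of_mem_U hfg ?_⟩
  calc σ.w (f * g) ≤ σ.w f + σ.w g := σ.N5 f g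
    _ ≤ σ.w 1 + σ.w 1 := add_le_add hfU hgU
    _ = σ.w 1 := by rw [σ.w_one, add_zero]

end Product

section Realization

variable {ρ σ : NearWeight F R}

lemma add_mem_Hset_of_snd_eq_zero (hU : ρ.U ∩ σ.U = Set.range (algebraMap F R))
    (S : Subalgebra F R) {a b : ℕ} (ha : (a, 0) ∈ Hset ρ σ S) (hb : (b, 0) ∈ Hset ρ σ S) :
    (a + b, 0) ∈ Hset ρ σ S := by
  have := nontrivial_of_mem_Hset ha
  obtain ⟨f, hfS, hf0, hf⟩ := ha
  obtain ⟨g, hgS, hg0, hg⟩ := hb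
  simp only [Prod.mk.injEq] at hf hg
  obtain ⟨hfg, hρ, hσ⟩ := nval_mul_of_nval_eq_zero ρ σ hU hf0 hg0 hf.2 hg.2
  exact ⟨f * g, S.mul_mem hfS hgS, hfg, by rw [hρ, hσ, hf.1, hg.1]⟩

lemma mk_zero_mem_Hset_of_mem_Hbarx [Nontrivial R]
    (hU : ρ.U ∩ σ.U = Set.range (algebraMap F R)) (S : Subalgebra F R) {Mx : Set ℕ}
    (hMx : (AddSubmonoid.closure Mx : Set ℕ) = Hbarx ρ σ)
    (hx : ∀ m ∈ Mx, (m, 0) ∈ Hset ρ σ S) {m : ℕ} (hm : m ∈ Hbarx ρ σ) :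
    (m, 0) ∈ Hset ρ σ S := by
  rw [← hMx, SetLike.mem_coe] at hm
  induction hm using AddSubmonoid.closure_induction with
  | mem m hm => exact hx m hm
  | zero => exact zero_mem_Hset S.one_mem
  | add a b _ _ ha hb => exact add_mem_Hset_of_snd_eq_zero hU S ha hb

lemma exists_lt_mk_mem_Hset [Nontrivial R] (S : Submodule F R) {m n k : ℕ} (hm : 0 < m)
    (hmn : (m, n) ∈ Hset ρ σ S) (hmk : (m, k) ∈ Hset ρ σ S) (hkn : k < n) :
    ∃ m' < m, (m', n) ∈ Hset ρ σ S := by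
  obtain ⟨f, hfS, hf0, hf⟩ := hmn
  obtain ⟨g, hgS, hg0, hg⟩ := hmk
  simp only [Prod.mk.injEq] at hf hg
  have hρf : ρ.w f = m := by rw [ρ.w_eq_nval hf0, hf.1]
  have hρg : ρ.w g = m := by rw [ρ.w_eq_nval hg0, hg.1]
  have hM : ρ.w 1 < m := by
    rw [ρ.w_one]
    exact_mod_cast hm
  obtain ⟨c, hc, hlt⟩ := ρ.N4 f g (hρf ▸ hM) (hρg ▸ hM) (hρf.trans hρg.symm)
  -- `f - c • g` keeps the σ-value `n` of `f`, since `σ(c • g) = k < n`.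
  have hσ : σ.w (f - c • g) = n := by
    rw [σ.w_sub_of_lt, σ.w_eq_nval hf0, hf.2]
    rw [σ.N1 c g hc, σ.w_eq_nval hg0, σ.w_eq_nval hf0, hg.2, hf.2]
    exact_mod_cast hkn
  have hne := σ.ne_zero_of_w_eq hσ
  refine ⟨ρ.nval (f - c • g), ?_, f - c • g, S.sub_mem hfS (S.smul_mem c hgS), hne,
    by rw [σ.nval_of_w_eq hσ]⟩
  rw [ρ.w_eq_nval hne, hρf] at hlt
  exact_mod_cast hlt

lemma yH_xH [Nontrivial R] {k n : ℕ} (hkn : (k, n) ∈ Hset ρ σ Set.univ)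
    (hx : xH ρ σ n ≠ 0) : yH ρ σ (xH ρ σ n) = n := by
  have hmn := mk_xH_mem_Hset_univ hkn
  refine (yH_le hmn).antisymm (not_lt.mp fun hlt => ?_)
  obtain ⟨m', hm', hm'n⟩ := exists_lt_mk_mem_Hset (⊤ : Submodule F R) (Nat.pos_of_ne_zero hx)
    (by rwa [Submodule.top_coe]) (by rw [Submodule.top_coe]; exact mk_yH_mem_Hset_univ hmn) hlt
  rw [Submodule.top_coe] at hm'n
  exact not_lt.mpr (xH_le hm'n) hm'

lemma mk_yH_mem_Hset {S : Set R} (hx : ∀ m ∈ Hbarx ρ σ, (m, 0) ∈ Hset ρ σ S)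
    (hΓ : GammaTilde ρ σ ⊆ Hset ρ σ S) (m : ℕ) : (m, yH ρ σ m) ∈ Hset ρ σ S := by
  by_cases hm : m ∈ Hbarx ρ σ
  · rw [Nat.eq_zero_of_le_zero (yH_le hm)]
    exact hx m hm
  · exact hΓ ⟨m, hm, rfl⟩

lemma mk_xH_mem_Hset [Nontrivial R] {S : Set R} (hy : ∀ n ∈ Hbary ρ σ, (0, n) ∈ Hset ρ σ S)
    (hΓ : GammaTilde ρ σ ⊆ Hset ρ σ S) {k n : ℕ} (hkn : (k, n) ∈ Hset ρ σ Set.univ) :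
    (xH ρ σ n, n) ∈ Hset ρ σ S := by
  by_cases hn : n ∈ Hbary ρ σ
  · rw [Nat.eq_zero_of_le_zero (xH_le hn)]
    exact hy n hn
  have hx : xH ρ σ n ≠ 0 := fun h => hn (h ▸ mk_xH_mem_Hset_univ hkn : (0, n) ∈ Hset ρ σ _)
  have hyx := yH_xH hkn hx
  refine hΓ ⟨xH ρ σ n, fun hmx => hn ?_, by rw [hyx]⟩
  obtain rfl : n = 0 := hyx ▸ Nat.eq_zero_of_le_zero (yH_le hmx)
  exact zero_mem_Hset (Set.mem_univ 1)

theorem Hset_eq_Hset_univ (hU : ρ.U ∩ σ.U = Set.range (algebraMap F R)) (S : Subalgebra F R)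
    {Mx Ny : Set ℕ} (hMx : (AddSubmonoid.closure Mx : Set ℕ) = Hbarx ρ σ)
    (hNy : (AddSubmonoid.closure Ny : Set ℕ) = Hbary ρ σ)
    (hsub : GammaTilde ρ σ ∪ (fun m => (m, 0)) '' Mx ∪ (fun n => (0, n)) '' Ny ⊆
      Hset ρ σ S) :
    Hset ρ σ S = Hset ρ σ Set.univ := by
  refine (Hset_mono (Set.subset_univ _)).antisymm fun p hp => ?_
  have := nontrivial_of_mem_Hset hp
  have hΓ : GammaTilde ρ σ ⊆ Hset ρ σ S := fun a ha => hsub (Or.inl (Or.inl ha))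
  have hx : ∀ m ∈ Hbarx ρ σ, (m, 0) ∈ Hset ρ σ S := fun m =>
    mk_zero_mem_Hset_of_mem_Hbarx hU S hMx fun m hm => hsub (Or.inl (Or.inr ⟨m, hm, rfl⟩))
  have hy : ∀ n ∈ Hbary ρ σ, (0, n) ∈ Hset ρ σ S := by
    rw [Hbary_eq_Hbarx_swap] at hNy ⊢
    refine fun n hn => mem_Hset_swap.mp (mk_zero_mem_Hset_of_mem_Hbarx
      (Set.inter_comm σ.U ρ.U ▸ hU) S hNy (fun n hn => ?_) hn)
    exact mem_Hset_swap.mpr (hsub (Or.inr ⟨n, hn, rfl⟩))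
  have hlub := lub_mem_Hset S.toAddSubmonoid (mk_yH_mem_Hset hx hΓ p.1) (mk_xH_mem_Hset hy hΓ hp)
  rwa [lub_mk_yH_mk_xH hp] at hlub

end Realization

end NearWeight

variable {F R : Type*} [Field F] [CommRing R] [Algebra F R]

theorem stmt8_general
    (ρ σ : NearWeight F R) (hwa : NearWeight.WellAgreeing ρ σ)
    (Mx Ny : Set ℕ)
    (hMx : (AddSubmonoid.closure Mx : Set ℕ) = NearWeight.Hbarx ρ σ)
    (hNy : (AddSubmonoid.closure Ny : Set ℕ) = NearWeight.Hbary ρ σ)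
    (Gplus : Set (ℕ × ℕ))
    (hGplus : Gplus = NearWeight.GammaTilde ρ σ ∪
      ((fun m => (m, (0 : ℕ))) '' Mx) ∪ ((fun n => ((0 : ℕ), n)) '' Ny))
    (φ : ℕ × ℕ → R)
    (hφ : ∀ a ∈ Gplus, φ a ≠ 0 ∧ (ρ.nval (φ a), σ.nval (φ a)) = a) :
    NearWeight.Hset ρ σ ((Algebra.adjoin F (φ '' Gplus) : Subalgebra F R) : Set R) =
      NearWeight.Hset ρ σ Set.univ := by
  have hsub : Gplus ⊆ NearWeight.Hset ρ σ (Algebra.adjoin F (φ '' Gplus) : Set R) :=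
    fun a ha => ⟨φ a, Algebra.subset_adjoin ⟨a, ha, rfl⟩, hφ a ha⟩
  exact NearWeight.Hset_eq_Hset_univ hwa.2 _ hMx hNy (hGplus ▸ hsub)

theorem stmt8
    (hinj : Function.Injective (algebraMap F R))
    (hsur : ¬ Function.Surjective (algebraMap F R))
    (ρ σ : NearWeight F R) (hwa : NearWeight.WellAgreeing ρ σ)
    (Mx Ny : Set ℕ) (hMxfin : Mx.Finite) (hNyfin : Ny.Finite)
    (hMx : (AddSubmonoid.closure Mx : Set ℕ) = NearWeight.Hbarx ρ σ)
    (hNy : (AddSubmonoid.closure Ny : Set ℕ) = NearWeight.Hbary ρ σ)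
    (Gplus : Set (ℕ × ℕ))
    (hGplus : Gplus = NearWeight.GammaTilde ρ σ ∪
      ((fun m => (m, (0 : ℕ))) '' Mx) ∪ ((fun n => ((0 : ℕ), n)) '' Ny))
    (φ : ℕ × ℕ → R)
    (hφ : ∀ a ∈ Gplus, φ a ≠ 0 ∧ (ρ.nval (φ a), σ.nval (φ a)) = a) :
    NearWeight.Hset ρ σ ((Algebra.adjoin F (φ '' Gplus) : Subalgebra F R) : Set R) =
      NearWeight.Hset ρ σ Set.univ :=
  stmt8_general ρ σ hwa Mx Ny hMx hNy Gplus hGplus φ hφ
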